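/- Let X, Y be finite random variables and T(Y) satisfy the Markov chain X–T(Y)–Y. For any auxiliary random variable U with X–Y–U a Markov chain, the Markov chain X–T(Y)–Y–U holds, and consequently I(Y;U) ≥ I(T(Y);U) and H(X|U) is unchanged; in particular every rate pair achievable with Y is achievable with T(Y). -/

import Mathlib

open scoped Classical BigOperators

/-- Probability of a set of outcomes under a pmf `p` on a finite sample space. -/
noncomputable def pr {Ω : Type*} [Fintype Ω] (p : Ω → ℝ) (s : Set Ω) : ℝ :=
  ∑ ω, if ω ∈ s then p ω else 0

/-- `p` is a probability mass function on the finite sample space `Ω`. -/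
def IsPMF {Ω : Type*} [Fintype Ω] (p : Ω → ℝ) : Prop :=
  (∀ ω, 0 ≤ p ω) ∧ (∑ ω, p ω) = 1

/-- The Markov chain `A – B – C`: `A` and `C` are conditionally independent given `B`. -/
def MarkovChain {Ω α β γ : Type*} [Fintype Ω] (p : Ω → ℝ)
    (A : Ω → α) (B : Ω → β) (C : Ω → γ) : Prop :=
  ∀ (a : α) (b : β) (c : γ),
    pr p {ω | A ω = a ∧ B ω = b ∧ C ω = c} * pr p {ω | B ω = b} =
      pr p {ω | A ω = a ∧ B ω = b} * pr p {ω | B ω = b ∧ C ω = c}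

/-- Conditional Shannon entropy `H(A | B)`. -/
noncomputable def condEnt {Ω α β : Type*} [Fintype Ω] [Fintype α] [Fintype β]
    (p : Ω → ℝ) (A : Ω → α) (B : Ω → β) : ℝ :=
  -∑ a : α, ∑ b : β,
    pr p {ω | A ω = a ∧ B ω = b} *
      Real.log (pr p {ω | A ω = a ∧ B ω = b} / pr p {ω | B ω = b})

/-- Mutual information `I(A ; B)`. -/
noncomputable def mutInfo {Ω α β : Type*} [Fintype Ω] [Fintype α] [Fintype β]
    (p : Ω → ℝ) (A : Ω → α) (B : Ω → β) : ℝ :=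
  ∑ a : α, ∑ b : β,
    pr p {ω | A ω = a ∧ B ω = b} *
      Real.log (pr p {ω | A ω = a ∧ B ω = b} /
        (pr p {ω | A ω = a} * pr p {ω | B ω = b}))

/-- Conditional mutual information `I(A ; B | C) = H(A|C) - H(A|B,C)`. -/
noncomputable def condMI {Ω α β γ : Type*} [Fintype Ω] [Fintype α] [Fintype β] [Fintype γ]
    (p : Ω → ℝ) (A : Ω → α) (B : Ω → β) (C : Ω → γ) : ℝ :=
  condEnt p A C - condEnt p A (fun ω => (B ω, C ω))

/-!
Fix `B = b` and `t = g b`. The chain `A – B – C` and the sufficiency chain `A – g(B) – B`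
multiply to `P(a,b,c) P(b) P(t) = P(a,t) P(b) P(b,c)`; cancelling `P(b)` (when it vanishes both
sides of the goal do) gives `A – g(B) – (B, C)`.

The inequality `I(g(Y); U) ≤ I(Y; U)` is data processing for a deterministic map: after
regrouping `I(g(Y); U)` as a sum over the values of `Y`, Gibbs' inequality
`q log (q / q') ≥ q - q'` applied termwise with `q' = P(y) P(g y, u) / P(g y)` bounds the difference
below by `∑ P(y,u) - ∑ q' ≥ 0`.
-/

open Finset Real

section Probability

variable {Ω α β γ δ : Type*} [Fintype Ω] {p : Ω → ℝ}

lemma pr_nonneg (hp : ∀ ω, 0 ≤ p ω) (s : Set Ω) : 0 ≤ pr p s :=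
  sum_nonneg fun ω _ => by split_ifs <;> simp [hp ω]

lemma pr_mono (hp : ∀ ω, 0 ≤ p ω) {s t : Set Ω} (h : s ⊆ t) : pr p s ≤ pr p t :=
  sum_le_sum fun ω _ => by
    by_cases hs : ω ∈ s
    · simp [hs, h hs]
    · by_cases ht : ω ∈ t <;> simp [hs, ht, hp ω]

lemma pr_eq_zero_of_subset (hp : ∀ ω, 0 ≤ p ω) {s t : Set Ω} (h : s ⊆ t) (ht : pr p t = 0) :
    pr p s = 0 :=
  le_antisymm (ht ▸ pr_mono hp h) (pr_nonneg hp s)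

lemma pr_eq_zero_of_forall_notMem (p : Ω → ℝ) {s : Set Ω} (h : ∀ ω, ω ∉ s) : pr p s = 0 :=
  sum_eq_zero fun ω _ => if_neg (h ω)

theorem MarkovChain.prod_of_comp (hp : ∀ ω, 0 ≤ p ω) {A : Ω → α} {B : Ω → β} {C : Ω → γ}
    {g : β → δ} (hABC : MarkovChain p A B C) (hsuff : MarkovChain p A (fun ω => g (B ω)) B) :
    MarkovChain p A (fun ω => g (B ω)) (fun ω => (B ω, C ω)) := by
  rintro a t ⟨b, c⟩
  simp only [Prod.mk.injEq]
  by_cases hbt : g b = t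
  swap
  · have hL : pr p {ω | A ω = a ∧ g (B ω) = t ∧ B ω = b ∧ C ω = c} = 0 :=
      pr_eq_zero_of_forall_notMem p fun ω ⟨_, ht, hb, _⟩ => hbt (hb ▸ ht)
    have hR : pr p {ω | g (B ω) = t ∧ B ω = b ∧ C ω = c} = 0 :=
      pr_eq_zero_of_forall_notMem p fun ω ⟨ht, hb, _⟩ => hbt (hb ▸ ht)
    rw [hL, hR, zero_mul, mul_zero]
  subst hbt
  have forget_g {x : β} : g x = g b ∧ x = b ↔ x = b := ⟨And.right, fun h => ⟨h ▸ rfl, h⟩⟩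
  have forget_g_and {x : β} {R : Prop} : g x = g b ∧ x = b ∧ R ↔ x = b ∧ R :=
    ⟨And.right, fun h => ⟨h.1 ▸ rfl, h⟩⟩
  have hsuff' := hsuff a (g b) b
  simp only [forget_g, forget_g_and] at hsuff' ⊢
  by_cases hb : pr p {ω | B ω = b} = 0
  · have hABC0 : pr p {ω | A ω = a ∧ B ω = b ∧ C ω = c} = 0 :=
      pr_eq_zero_of_subset hp (fun ω hω => hω.2.1) hb
    have hBC0 : pr p {ω | B ω = b ∧ C ω = c} = 0 := pr_eq_zero_of_subset hp (fun ω hω => hω.1) hb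
    rw [hABC0, hBC0, zero_mul, mul_zero]
  apply mul_right_cancel₀ hb
  linear_combination pr p {ω | g (B ω) = g b} * hABC a b c + pr p {ω | B ω = b ∧ C ω = c} * hsuff'

variable [Fintype α]

lemma sum_pr_and_eq (p : Ω → ℝ) (Q : Ω → Prop) (f : Ω → α) :
    ∑ a, pr p {ω | Q ω ∧ f ω = a} = pr p {ω | Q ω} := by
  unfold pr
  rw [sum_comm]
  refine sum_congr rfl fun ω _ => ?_
  by_cases hQ : Q ω <;> simp [hQ]

lemma sum_pr_eq_and_mul (p : Ω → ℝ) (f : Ω → α) (Q : Ω → Prop) (F : α → ℝ) :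
    ∑ a, pr p {ω | f ω = a ∧ Q ω} * F a = ∑ ω, if Q ω then p ω * F (f ω) else 0 := by
  unfold pr
  simp_rw [sum_mul]
  rw [sum_comm]
  refine sum_congr rfl fun ω _ => ?_
  by_cases hQ : Q ω <;> simp [hQ]

lemma sum_pr_comp_eq_and_mul [Fintype β] (p : Ω → ℝ) (Y : Ω → α) (g : α → β) (Q : Ω → Prop)
    (F : β → ℝ) :
    ∑ b, pr p {ω | g (Y ω) = b ∧ Q ω} * F b = ∑ a, pr p {ω | Y ω = a ∧ Q ω} * F (g a) := by
  rw [sum_pr_eq_and_mul, sum_pr_eq_and_mul]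

end Probability

lemma sub_le_mul_log_div {q q' : ℝ} (hq : 0 ≤ q) (hq' : 0 ≤ q') (hpos : 0 < q → 0 < q') :
    q - q' ≤ q * log (q / q') := by
  rcases hq.eq_or_lt with rfl | hq
  · simpa using hq'
  have h := one_sub_inv_le_log_of_pos (div_pos hq (hpos hq))
  rw [inv_div] at h
  calc q - q' = q * (1 - q' / q) := by field_simp
    _ ≤ q * log (q / q') := mul_le_mul_of_nonneg_left h hq.le

/-- The termwise bound behind data processing: `q, a, b, r, s` play the roles of
`P(y,u), P(y), P(u), P(g y, u), P(g y)`. -/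
lemma sub_mul_div_le_mul_log_sub_mul_log {q a b r s : ℝ} (hq : 0 ≤ q) (ha : q ≤ a) (hb : q ≤ b)
    (hr : q ≤ r) (hs : a ≤ s) :
    q - a * r / s ≤ q * log (q / (a * b)) - q * log (r / (s * b)) := by
  rcases hq.eq_or_lt with rfl | hq
  · have : 0 ≤ a * r / s := div_nonneg (mul_nonneg ha hr) (ha.trans hs)
    simpa using this
  have ha' := hq.trans_le ha
  have hb' := hq.trans_le hb
  have hr' := hq.trans_le hr
  have hs' := ha'.trans_le hs
  calc q - a * r / s ≤ q * log (q / (a * r / s)) :=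
        sub_le_mul_log_div hq.le (by positivity) fun _ => by positivity
    _ = q * log (q / (a * b)) - q * log (r / (s * b)) := by
        rw [← mul_sub, ← log_div (by positivity) (by positivity)]
        congr 2
        field_simp

section Information

variable {Ω α β γ : Type*} [Fintype Ω] [Fintype α] [Fintype β] [Fintype γ] {p : Ω → ℝ}

theorem mutInfo_comp_le (hp : ∀ ω, 0 ≤ p ω) (Y : Ω → α) (U : Ω → β) (g : α → γ) :
    mutInfo p (fun ω => g (Y ω)) U ≤ mutInfo p Y U := by
  have regroup : mutInfo p (fun ω => g (Y ω)) U =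
      ∑ y, ∑ u, pr p {ω | Y ω = y ∧ U ω = u} *
        log (pr p {ω | g (Y ω) = g y ∧ U ω = u} /
          (pr p {ω | g (Y ω) = g y} * pr p {ω | U ω = u})) := by
    unfold mutInfo
    rw [sum_comm, sum_comm (γ := α)]
    exact sum_congr rfl fun u _ => sum_pr_comp_eq_and_mul p Y g _ _
  have mass (y : α) : ∑ u, pr p {ω | Y ω = y} * pr p {ω | g (Y ω) = g y ∧ U ω = u} /
      pr p {ω | g (Y ω) = g y} ≤ pr p {ω | Y ω = y} := by
    rw [← sum_div, ← mul_sum, sum_pr_and_eq, mul_div_assoc]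
    exact mul_le_of_le_one_right (pr_nonneg hp _) (div_self_le_one _)
  rw [regroup, mutInfo, ← sub_nonneg, ← sum_sub_distrib]
  calc (0 : ℝ) ≤ ∑ y, ∑ u, (pr p {ω | Y ω = y ∧ U ω = u} -
        pr p {ω | Y ω = y} * pr p {ω | g (Y ω) = g y ∧ U ω = u} / pr p {ω | g (Y ω) = g y}) :=
      sum_nonneg fun y _ => by
        rw [sum_sub_distrib, sum_pr_and_eq]
        linarith [mass y]
    _ ≤ _ := sum_le_sum fun y _ => by
      rw [← sum_sub_distrib]
      refine sum_le_sum fun u _ => sub_mul_div_le_mul_log_sub_mul_log (pr_nonneg hp _) ?_ ?_ ?_ ?_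
      all_goals exact pr_mono hp fun ω hω => by simp_all

end Information

/-- Key step of Theorem 6: from `X – Y – U` and `X – T(Y) – Y`, the long Markov chain
`X – T(Y) – Y – U` holds (here expressed as `X – T(Y) – (Y, U)`), hence `I(Y;U) ≥ I(T(Y);U)`
while `H(X|U)` is unchanged; in particular, every rate pair achievable with `Y` is achievable
with `T(Y)`. -/
theorem rate_pair_reduction_via_sufficiency
    {Ω 𝒳 𝒴 𝒰 𝒯 : Type*} [Fintype Ω] [Fintype 𝒳] [Fintype 𝒴] [Fintype 𝒰] [Fintype 𝒯]
    (p : Ω → ℝ) (hp : IsPMF p)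
    (X : Ω → 𝒳) (Y : Ω → 𝒴) (U : Ω → 𝒰) (T : 𝒴 → 𝒯)
    (h1 : MarkovChain p X Y U)
    (h2 : MarkovChain p X (fun ω => T (Y ω)) Y) :
    MarkovChain p X (fun ω => T (Y ω)) (fun ω => (Y ω, U ω)) ∧
      mutInfo p Y U ≥ mutInfo p (fun ω => T (Y ω)) U ∧
      ∀ r : ℝ × ℝ, (condEnt p X U ≤ r.1 ∧ mutInfo p Y U ≤ r.2) →
        (condEnt p X U ≤ r.1 ∧ mutInfo p (fun ω => T (Y ω)) U ≤ r.2) := by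
  have hdpi := mutInfo_comp_le hp.1 Y U T
  exact ⟨h1.prod_of_comp hp.1 h2, hdpi, fun _ hr => ⟨hr.1, hdpi.trans hr.2⟩⟩
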